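/- arXiv:2103.01430 — 4 statements merged into one kernel-verified Lean document; each statement's English description precedes it below -/
import Mathlib

section
/- Every finitely generated equationally Noetherian group is Hopfian, i.e., every surjective endomorphism of the group is an isomorphism. -/
/-!
Choose generators `g : Fin ℓ → G`, i.e. a surjection `π : F(x₁,…,x_ℓ) → G`. The kernels of
the iterates `fⁿ` increase, so `Sₙ = π⁻¹(ker fⁿ)` is an increasing chain of
systems of equations. By equational Noetherianity, the union of the chain has the same solutions
as some `S_N`; the tuple `f^N ∘ g` solves `S_N`, hence `S_{N+1}`, which says
`ker f^{N+1} ≤ ker f^N`. If `f x = 1`, write `x = f^N y`; then `y ∈ ker f^{N+1} = ker f^N`,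
so `x = 1`.
-/

/-- The algebraic set over `G` defined by the system of equations `S`. -/
def algSet (G : Type*) [Group G] {ℓ : ℕ} (S : Set (FreeGroup (Fin ℓ))) :
    Set (Fin ℓ → G) :=
  {g | ∀ s ∈ S, FreeGroup.lift g s = 1}

/-- `G` is equationally Noetherian: every system of equations is equivalent to a
finite subsystem. -/
def EquationallyNoetherian (G : Type*) [Group G] : Prop :=
  ∀ (ℓ : ℕ) (S : Set (FreeGroup (Fin ℓ))), ∃ S₀ : Set (FreeGroup (Fin ℓ)),
    S₀ ⊆ S ∧ S₀.Finite ∧ algSet G S₀ = algSet G S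

theorem algSet_anti {G : Type*} [Group G] {ℓ : ℕ} {S T : Set (FreeGroup (Fin ℓ))} (h : S ⊆ T) :
    algSet G T ⊆ algSet G S :=
  fun _ hg s hs => hg s (h hs)

theorem comp_mem_algSet_iff {G H : Type*} [Group G] [Group H] {ℓ : ℕ}
    {S : Set (FreeGroup (Fin ℓ))} (φ : H →* G) (g : Fin ℓ → H) :
    φ ∘ g ∈ algSet G S ↔ S ⊆ φ.ker.comap (FreeGroup.lift g) := by
  have hlift : FreeGroup.lift (φ ∘ g) = φ.comp (FreeGroup.lift g) :=
    FreeGroup.ext_hom _ _ fun _ => by simp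
  simp only [algSet, Set.mem_ofPred_eq, hlift]
  rfl

theorem Group.FG.exists_lift_surjective {G : Type*} [Group G] (hfg : Group.FG G) :
    ∃ (ℓ : ℕ) (g : Fin ℓ → G), Function.Surjective (FreeGroup.lift g) := by
  obtain ⟨T, hT⟩ := Group.fg_def.mp hfg
  refine ⟨T.card, (↑) ∘ T.equivFin.symm, ?_⟩
  rw [← MonoidHom.range_eq_top, FreeGroup.range_lift_eq_closure, Set.range_comp,
    T.equivFin.symm.range_eq_univ, Set.image_univ, Subtype.range_coe]
  exact hT

namespace EquationallyNoetherian

variable {G : Type*} [Group G]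

theorem exists_algSet_iUnion_eq (hEN : EquationallyNoetherian G) {ℓ : ℕ} {ι : Type*}
    [Nonempty ι] {S : ι → Set (FreeGroup (Fin ℓ))} (hS : Directed (· ⊆ ·) S) :
    ∃ i, algSet G (⋃ i, S i) = algSet G (S i) := by
  obtain ⟨S₀, hS₀S, hS₀fin, hS₀⟩ := hEN ℓ (⋃ i, S i)
  obtain ⟨i, hi⟩ := hS.exists_mem_subset_of_finset_subset_biUnion
    (s := hS₀fin.toFinset) (by rwa [Set.Finite.coe_toFinset])
  rw [Set.Finite.coe_toFinset] at hi
  refine ⟨i, (algSet_anti (Set.subset_iUnion S i)).antisymm ?_⟩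
  rw [← hS₀]
  exact algSet_anti hi

theorem exists_forall_ker_le {F ι : Type*} [FunLike F G G] [MonoidHomClass F G G] [Nonempty ι]
    (hfg : Group.FG G) (hEN : EquationallyNoetherian G) {φ : ι → F}
    (hφ : Directed (· ≤ ·) fun i => MonoidHom.ker (φ i : G →* G)) :
    ∃ i, ∀ j, MonoidHom.ker (φ j : G →* G) ≤ MonoidHom.ker (φ i : G →* G) := by
  obtain ⟨ℓ, g, hg⟩ := hfg.exists_lift_surjective
  let S j : Set (FreeGroup (Fin ℓ)) := (MonoidHom.ker (φ j : G →* G)).comap (FreeGroup.lift g)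
  have hS : Directed (· ⊆ ·) S := fun a b => by
    obtain ⟨c, hac, hbc⟩ := hφ a b
    exact ⟨c, Subgroup.comap_mono hac, Subgroup.comap_mono hbc⟩
  obtain ⟨i, hi⟩ := hEN.exists_algSet_iUnion_eq hS
  -- The images under `φ i` of the generators solve the system `S i`, hence every `S j`.
  have hmem : (φ i : G →* G) ∘ g ∈ algSet G (⋃ j, S j) := by
    rw [hi, comp_mem_algSet_iff]
  refine ⟨i, fun j x hx => ?_⟩
  obtain ⟨w, rfl⟩ := hg x
  exact (comp_mem_algSet_iff _ _).mp hmem (Set.mem_iUnion_of_mem j hx)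

end EquationallyNoetherian

/-- every finitely generated equationally Noetherian group is
Hopfian: every surjective endomorphism is an isomorphism. -/
theorem hopfian_of_equationallyNoetherian {G : Type*} [Group G]
    (hfg : Group.FG G) (hEN : EquationallyNoetherian G) :
    ∀ f : G →* G, Function.Surjective f → Function.Bijective f := by
  intro f hf
  let F : Monoid.End G := f
  obtain ⟨N, hN⟩ := hEN.exists_forall_ker_le hfg (φ := fun n : ℕ => F ^ n) <|
    Monotone.directed_le fun m n hmn x hx => by
      simp only [MonoidHom.mem_ker, MonoidHom.coe_coe, Monoid.End.coe_pow] at hx ⊢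
      rw [← Nat.sub_add_cancel hmn, Function.iterate_add_apply, hx, iterate_map_one]
  refine ⟨(injective_iff_map_eq_one f).mpr fun x hx => ?_, hf⟩
  obtain ⟨y, rfl⟩ := hf.iterate N x
  have hy := hN (N + 1) (x := y)
  simp only [MonoidHom.mem_ker, MonoidHom.coe_coe, Monoid.End.coe_pow] at hy
  exact hy (by rwa [Function.iterate_succ_apply'])
end

section
/- Basic factoring principle: Let {g_n : F → G} be a sequence of surjective homomorphisms from a finitely generated free group F to an equationally Noetherian group G, and suppose the sequence is stable with stable kernel K, giving the limit quotient η : F → L = F/K. Then for all sufficiently large n, g_n factors through η, i.e., there exists a homomorphism h_n : L → G with h_n ∘ η = g_n. -/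
open Filter

theorem lift_symm_mem_algSet_iff {G : Type*} [Group G] {ℓ : ℕ}
    (S : Set (FreeGroup (Fin ℓ))) (f : FreeGroup (Fin ℓ) →* G) :
    FreeGroup.lift.symm f ∈ algSet G S ↔ S ⊆ f.ker := by
  simp only [algSet, Set.mem_ofPred_eq, Equiv.apply_symm_apply]
  rfl

theorem EquationallyNoetherian.eventually_subset_ker {G ι : Type*} [Group G]
    (hEN : EquationallyNoetherian G) {ℓ : ℕ} (S : Set (FreeGroup (Fin ℓ))) {l : Filter ι}
    (f : ι → FreeGroup (Fin ℓ) →* G) (h : ∀ s ∈ S, ∀ᶠ i in l, f i s = 1) :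
    ∀ᶠ i in l, S ⊆ (f i).ker := by
  obtain ⟨S₀, hS₀S, hS₀fin, hS₀eq⟩ := hEN ℓ S
  have hS₀ : ∀ᶠ i in l, ∀ s ∈ S₀, f i s = 1 :=
    hS₀fin.eventually_all.2 fun s hs => h s (hS₀S hs)
  filter_upwards [hS₀] with i hi
  rw [← lift_symm_mem_algSet_iff, ← hS₀eq, lift_symm_mem_algSet_iff]
  exact hi

theorem factor_through_limit_general {G L : Type*} [Group G] [Group L]
    (hEN : EquationallyNoetherian G) (ℓ : ℕ)
    (g : ℕ → (FreeGroup (Fin ℓ) →* G))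
    (η : FreeGroup (Fin ℓ) →* L) (hη : Function.Surjective η)
    (hker : ∀ w : FreeGroup (Fin ℓ), (η w = 1 ↔ ∀ᶠ n in atTop, g n w = 1)) :
    ∀ᶠ n in atTop, ∃ h : L →* G, h.comp η = g n := by
  filter_upwards [hEN.eventually_subset_ker (η.ker : Set _) g fun w hw => (hker w).1 hw]
    with n hn
  exact ⟨η.liftOfSurjective hη ⟨g n, hn⟩, η.liftOfRightInverse_comp _ _ _⟩

/-- basic factoring principle for equationally Noetherian groups. -/
theorem factor_through_limit {G L : Type*} [Group G] [Group L]
    (hEN : EquationallyNoetherian G) (ℓ : ℕ)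
    (g : ℕ → (FreeGroup (Fin ℓ) →* G))
    (hsurj : ∀ n, Function.Surjective (g n))
    (hstab : ∀ w : FreeGroup (Fin ℓ),
      (∀ᶠ n in atTop, g n w = 1) ∨ (∀ᶠ n in atTop, g n w ≠ 1))
    (η : FreeGroup (Fin ℓ) →* L) (hη : Function.Surjective η)
    (hker : ∀ w : FreeGroup (Fin ℓ), (η w = 1 ↔ ∀ᶠ n in atTop, g n w = 1)) :
    ∀ᶠ n in atTop, ∃ h : L →* G, h.comp η = g n :=
  factor_through_limit_general hEN ℓ g η hη hker
end

section
/- Growth-tightness obstruction: Let H be a finitely generated group that is growth-tight (for every surjective non-injective endomorphism h : H → H and every finite generating set S, e(H,S) > e(H, h(S))). If H is non-Hopfian, then the infimum e(H) = inf_S e(H,S) is not attained by any finite generating set; in particular ξ(H) has no minimum and is not well-ordered. -/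
open Filter

/-- The ball of radius `n` in the word metric on `G` with respect to the
finite set `S`: products of at most `n` elements of `S ∪ S⁻¹`. -/
def wordBall {G : Type*} [Group G] (S : Finset G) (n : ℕ) : Set G :=
  {g | ∃ l : List G, l.length ≤ n ∧ (∀ x ∈ l, x ∈ S ∨ x⁻¹ ∈ S) ∧ l.prod = g}

/-- The exponential growth rate `e(G,S) = lim_n |B_n(G,S)|^{1/n}`
(implemented as a `limsup`, which agrees with the limit since the limit exists). -/
noncomputable def growthRate {G : Type*} [Group G] (S : Finset G) : ℝ :=
  Filter.limsup (fun n : ℕ => (Nat.card ↥(wordBall S n) : ℝ) ^ (1 / (n : ℝ))) Filter.atTop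

theorem Subgroup.closure_finset_image_eq_top {G N : Type*} [Group G] [Group N] [DecidableEq N]
    {f : G →* N} (hf : Function.Surjective f) {S : Finset G}
    (hS : Subgroup.closure (S : Set G) = ⊤) :
    Subgroup.closure ((S.image f : Finset N) : Set N) = ⊤ := by
  rw [Finset.coe_image, ← MonoidHom.map_closure, hS, ← MonoidHom.range_eq_map,
    MonoidHom.range_eq_top]
  exact hf

theorem Set.not_isWF_of_forall_exists_lt {α : Type*} [Preorder α] {s : Set α}
    (hs : s.Nonempty) (h : ∀ a ∈ s, ∃ b ∈ s, b < a) : ¬ s.IsWF := fun hwf =>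
  let ⟨_, hb, hlt⟩ := h _ (hwf.min_mem hs)
  hwf.not_lt_min hs hb hlt

/-- a finitely generated growth-tight non-Hopfian group does not
attain its infimal growth rate; in particular `ξ(H)` has no minimum and is not
well-ordered. -/
theorem growth_tight_not_wellordered {H : Type*} [Group H] [DecidableEq H]
    (hfg : Group.FG H)
    (htight : ∀ f : H →* H, Function.Surjective f → ¬ Function.Injective f →
      ∀ S : Finset H, Subgroup.closure (S : Set H) = ⊤ →
        growthRate (S.image f) < growthRate S)
    (hnonhopf : ∃ f : H →* H, Function.Surjective f ∧ ¬ Function.Injective f) :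
    (∀ S : Finset H, Subgroup.closure (S : Set H) = ⊤ →
      ∃ T : Finset H, Subgroup.closure (T : Set H) = ⊤ ∧
        growthRate T < growthRate S) ∧
    ¬ Set.IsWF {r : ℝ | ∃ S : Finset H,
        Subgroup.closure (S : Set H) = ⊤ ∧ growthRate S = r} := by
  obtain ⟨f, hf_surj, hf_not_inj⟩ := hnonhopf
  have hdescend : ∀ S : Finset H, Subgroup.closure (S : Set H) = ⊤ →
      ∃ T : Finset H, Subgroup.closure (T : Set H) = ⊤ ∧ growthRate T < growthRate S :=
    fun S hS => ⟨S.image f, Subgroup.closure_finset_image_eq_top hf_surj hS,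
      htight f hf_surj hf_not_inj S hS⟩
  refine ⟨hdescend, Set.not_isWF_of_forall_exists_lt ?_ ?_⟩
  · obtain ⟨S₀, hS₀⟩ := hfg
    exact ⟨growthRate S₀, S₀, hS₀, rfl⟩
  · rintro _ ⟨S, hS, rfl⟩
    obtain ⟨T, hT, hlt⟩ := hdescend S hS
    exact ⟨growthRate T, ⟨T, hT, rfl⟩, hlt⟩
end

section
/- Let G be a finitely presented group, N ◁ G a finite normal subgroup, q : G → G' = G/N the quotient map, and {S_k} a family of finite generating sets of G all of cardinality ℓ with S'_k = q(S_k). If the family {S'_k} is finite up to the action of Aut(G'), then {S_k} is finite up to the action of Aut(G). -/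
/-- `G` is finitely presented: a quotient of a finitely generated free group by
the normal closure of a finite set of relations. -/
def FinitelyPresentedGroup (G : Type*) [Group G] : Prop :=
  ∃ (n : ℕ) (T : Finset (FreeGroup (Fin n))),
    Nonempty ((FreeGroup (Fin n) ⧸
      Subgroup.normalClosure (T : Set (FreeGroup (Fin n)))) ≃* G)

/-!
A generating `ℓ`-tuple `S` of `G` is determined up to `Aut(G)` by the kernel of
`FreeGroup (Fin ℓ) → G`, so it suffices to show that only finitely many such kernels occur.
By hypothesis the kernels `K'` of the composites `FreeGroup (Fin ℓ) → G → G/N` form a finite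
set, and each is the normal closure of a finite set `R` since `G/N` is finitely presented.
A homomorphism `π` with `ker (q ∘ π) = ⟪R⟫` is determined on `⟪R⟫ ⊇ ker π` by its values on
`R`, which lie in the finite group `N`, and by the conjugation action of the generators on `N`;
hence only finitely many kernels lie over each `K'`.
-/

open Function Subgroup

theorem Set.Finite.image_of_factorsThrough {α X Y : Type*} {s : Set α} {f : α → X} {g : α → Y}
    (hg : (g '' s).Finite) (h : ∀ a ∈ s, ∀ b ∈ s, g a = g b → f a = f b) :
    (f '' s).Finite := by
  rcases isEmpty_or_nonempty α with _ | _
  · simp [Set.eq_empty_of_isEmpty s]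
  refine (hg.image (f ∘ invFunOn g s)).subset ?_
  rintro _ ⟨a, ha, rfl⟩
  have hga : ∃ b ∈ s, g b = g a := ⟨a, ha, rfl⟩
  exact ⟨g a, mem_image_of_mem g ha,
    h _ (invFunOn_mem hga) _ ha (invFunOn_eq hga)⟩

theorem FinitelyPresentedGroup.isFinitelyPresented {G : Type*} [Group G]
    (h : FinitelyPresentedGroup G) : Group.IsFinitelyPresented G := by
  obtain ⟨n, T, ⟨e⟩⟩ := h
  exact Group.IsFinitelyPresented.equiv (G := PresentedGroup (T : Set (FreeGroup (Fin n)))) e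

theorem Group.IsFinitelyPresented.ker_isFinitelyNormallyGenerated {H β : Type*} [Group H]
    [hH : Group.IsFinitelyPresented H] [Finite β] {p : FreeGroup β →* H} (hp : Surjective p) :
    p.ker.IsFinitelyNormallyGenerated := by
  obtain ⟨n, φ, hφ, T, hT, hTφ⟩ := hH
  choose a ha using fun i => hφ (p (FreeGroup.of i))
  choose b hb using fun j => hp (φ (FreeGroup.of j))
  set f := FreeGroup.lift a
  set g := FreeGroup.lift b
  have hφf : ∀ w, φ (f w) = p w := DFunLike.congr_fun <|
    show φ.comp f = p from FreeGroup.ext_hom _ _ (by simp [f, ha])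
  have hpg : ∀ w, p (g w) = φ w := DFunLike.congr_fun <|
    show p.comp g = φ from FreeGroup.ext_hom _ _ (by simp [g, hb])
  set R := g '' T ∪ Set.range fun i => (FreeGroup.of i)⁻¹ * g (f (FreeGroup.of i))
  set M := normalClosure R
  refine ⟨R, (hT.image g).union (Set.finite_range _), le_antisymm ?_ ?_⟩
  · refine normalClosure_le_normal ?_
    rintro _ (⟨r, hr, rfl⟩ | ⟨i, rfl⟩)
    · have hr : r ∈ φ.ker := hTφ ▸ subset_normalClosure hr
      simpa [hpg] using hr
    · simp [hpg, hφf]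
  -- modulo `⟪R⟫`, `g ∘ f` is the identity, and `f` maps `ker p` into `ker φ = ⟪T⟫`
  · intro w hw
    have hgf : (QuotientGroup.mk' M).comp (g.comp f) = QuotientGroup.mk' M :=
      FreeGroup.ext_hom _ _ fun i =>
        (QuotientGroup.eq.2 (subset_normalClosure (s := R) (Or.inr ⟨i, rfl⟩))).symm
    have hfw : f w ∈ normalClosure (T : Set _) := by
      rw [hTφ, MonoidHom.mem_ker, hφf]; exact hw
    have hgfw : g (f w) ∈ M :=
      normalClosure_le_normal (N := M.comap g)
        (fun r hr => subset_normalClosure (Or.inl ⟨r, hr, rfl⟩)) hfw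
    change w ∈ M
    rw [← QuotientGroup.ker_mk' M, MonoidHom.mem_ker, ← DFunLike.congr_fun hgf w]
    simpa using hgfw

namespace MonoidHom

variable {F G : Type*} [Group F] [Group G]

theorem ker_eq_ker_of_eqOn {π₁ π₂ : F →* G} {M : Subgroup F} (h₁ : π₁.ker ≤ M)
    (h₂ : π₂.ker ≤ M) (h : Set.EqOn π₁ π₂ M) : π₁.ker = π₂.ker := by
  ext w
  refine ⟨fun hw => ?_, fun hw => ?_⟩
  · rwa [mem_ker, ← h (h₁ hw)]
  · rwa [mem_ker, h (h₂ hw)]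

variable (N : Subgroup G) [N.Normal]

theorem eqOn_normalClosure_of_conjNormal_comp_eq {π₁ π₂ : F →* G} {R : Set F}
    (hRN : ∀ r ∈ R, π₁ r ∈ N) (hR : Set.EqOn π₁ π₂ R)
    (hconj : (MulAut.conjNormal (H := N)).comp π₁ = MulAut.conjNormal.comp π₂) :
    Set.EqOn π₁ π₂ (normalClosure R) := by
  refine eqOn_closure fun x hx => ?_
  obtain ⟨r, hr, hconjr⟩ := Group.mem_conjugatesOfSet_iff.1 hx
  obtain ⟨c, rfl⟩ := isConj_iff.1 hconjr
  have key := congrArg (fun ψ : MulAut N => (ψ ⟨π₁ r, hRN r hr⟩ : G))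
    (DFunLike.congr_fun hconj c)
  simp only [MulAut.conjNormal_apply, MonoidHom.comp_apply] at key
  simpa [← hR hr] using key

end MonoidHom

theorem Subgroup.IsFinitelyNormallyGenerated.finite_ker_image_of_ker_mk'_comp_eq
    {G β : Type*} [Group G] [Finite β] (N : Subgroup G) [N.Normal] [Finite N]
    {K : Subgroup (FreeGroup β)} (hK : K.IsFinitelyNormallyGenerated) :
    (MonoidHom.ker '' {π : FreeGroup β →* G | ((QuotientGroup.mk' N).comp π).ker = K}).Finite := by
  obtain ⟨R, hR, rfl⟩ := hK
  have : Finite R := hR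
  simp only [← MonoidHom.comap_ker, QuotientGroup.ker_mk']
  let data (π : FreeGroup β →* G) : (β → MulAut N) × (R → G) :=
    (fun i => MulAut.conjNormal (π (FreeGroup.of i)), fun r : R => π r)
  refine Set.Finite.image_of_factorsThrough (g := data) ?_ ?_
  · refine (Set.finite_univ.prod (Set.Finite.pi fun _ => (N : Set G).toFinite)).subset ?_
    rintro _ ⟨π, hπ, rfl⟩
    exact ⟨trivial, fun r _ => (hπ ▸ subset_normalClosure r.2 : r.1 ∈ N.comap π)⟩
  · intro π₁ hπ₁ π₂ hπ₂ hdata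
    obtain ⟨hconj, hR⟩ := Prod.ext_iff.1 hdata
    refine MonoidHom.ker_eq_ker_of_eqOn (hπ₁ ▸ π₁.ker_le_comap N) (hπ₂ ▸ π₂.ker_le_comap N)
      (MonoidHom.eqOn_normalClosure_of_conjNormal_comp_eq N
        (fun r hr => (hπ₁ ▸ subset_normalClosure hr : r ∈ N.comap π₁))
        (fun r hr => congrFun hR ⟨r, hr⟩)
        (FreeGroup.ext_hom _ _ (congrFun hconj)))

namespace FreeGroup

variable {α G H : Type*} [Group G] [Group H]

theorem ker_eq_ker_lift_of_mulEquiv (f : FreeGroup α →* G) (φ : H ≃* G) (T : α → H)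
    (h : ∀ i, φ (T i) = f (of i)) : f.ker = (lift T).ker := by
  rw [show f = (φ : H →* G).comp (lift T) from ext_hom _ _ fun i => by simp [h],
    MonoidHom.ker_mulEquiv_comp]

theorem exists_mulEquiv_comp_eq_of_ker_lift_eq {S T : α → G}
    (hS : closure (Set.range S) = ⊤) (hT : closure (Set.range T) = ⊤)
    (h : (lift T).ker = (lift S).ker) : ∃ φ : G ≃* G, (fun i => φ (T i)) = S := by
  have hS' := lift_surjective_iff_closure_range_eq_top.2 hS
  have hT' := lift_surjective_iff_closure_range_eq_top.2 hT
  refine ⟨(QuotientGroup.quotientKerEquivOfSurjective _ hT').symm.trans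
    ((QuotientGroup.quotientMulEquivOfEq h).trans
      (QuotientGroup.quotientKerEquivOfSurjective _ hS')), funext fun i => ?_⟩
  have hTi : (QuotientGroup.quotientKerEquivOfSurjective _ hT').symm (T i) =
      (of i : FreeGroup α) := by
    rw [MulEquiv.symm_apply_eq]
    exact (lift_apply_of (f := T)).symm
  rw [MulEquiv.trans_apply, MulEquiv.trans_apply, hTi]
  exact lift_apply_of

theorem exists_finset_mulEquiv_comp_eq_of_finite_ker {ι : Type*} {S : ι → α → G}
    (hgen : ∀ k, closure (Set.range (S k)) = ⊤)
    (hker : (Set.range fun k => (lift (S k)).ker).Finite) :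
    ∃ t : Finset (α → G), ∀ k, ∃ T ∈ t, ∃ φ : G ≃* G, (fun i => φ (T i)) = S k := by
  classical
  set K := fun k => (lift (S k)).ker
  obtain ⟨s, -, hs, hs_ker⟩ := Set.exists_subset_image_finite_and (p := (· = K '' Set.univ)).1
    ⟨_, Set.image_univ.symm.subset, hker, Set.image_univ.symm⟩
  refine ⟨hs.toFinset.image S, fun k => ?_⟩
  obtain ⟨k', hk', hk'_ker⟩ := hs_ker.symm ▸ Set.mem_image_of_mem _ (Set.mem_univ k)
  exact ⟨S k', Finset.mem_image_of_mem _ (hs.mem_toFinset.2 hk'),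
    exists_mulEquiv_comp_eq_of_ker_lift_eq (hgen k) (hgen k') hk'_ker⟩

end FreeGroup

/-- lifting lemma: if the images in `G' = G/N` of a family of
generating `ℓ`-tuples of `G` are finite up to `Aut(G')`, then the family is
finite up to `Aut(G)`. -/
theorem lifting_lemma {G : Type*} [Group G] (hfp : FinitelyPresentedGroup G)
    (N : Subgroup G) [N.Normal] [Finite N] {ι : Type*} (ℓ : ℕ)
    (S : ι → Fin ℓ → G)
    (hgen : ∀ k, Subgroup.closure (Set.range (S k)) = ⊤)
    (hquot : ∃ t : Finset (Fin ℓ → G ⧸ N), ∀ k, ∃ T ∈ t,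
      ∃ φ : (G ⧸ N) ≃* (G ⧸ N),
        (fun i => φ (T i)) = fun i => QuotientGroup.mk' N (S k i)) :
    ∃ t : Finset (Fin ℓ → G), ∀ k, ∃ T ∈ t,
      ∃ φ : G ≃* G, (fun i => φ (T i)) = S k := by
  obtain ⟨t, ht⟩ := hquot
  have := hfp.isFinitelyPresented
  have : Group.IsFinitelyPresented (G ⧸ N) := .quotient N (.of_FG N)
  refine FreeGroup.exists_finset_mulEquiv_comp_eq_of_finite_ker hgen ?_
  let C := {K ∈ (fun T : Fin ℓ → G ⧸ N => (FreeGroup.lift T).ker) '' t |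
    K.IsFinitelyNormallyGenerated}
  have hC : C.Finite := (t.finite_toSet.image _).sep _
  refine (hC.biUnion fun K hK => hK.2.finite_ker_image_of_ker_mk'_comp_eq N).subset ?_
  rintro _ ⟨k, rfl⟩
  obtain ⟨T, hT, φ, hφ⟩ := ht k
  let π := (QuotientGroup.mk' N).comp (FreeGroup.lift (S k))
  have hπT : π.ker = (FreeGroup.lift T).ker :=
    FreeGroup.ker_eq_ker_lift_of_mulEquiv π φ T fun i => by simpa [π] using congrFun hφ i
  have hπ : π.ker.IsFinitelyNormallyGenerated :=
    Group.IsFinitelyPresented.ker_isFinitelyNormallyGenerated <|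
      (QuotientGroup.mk'_surjective N).comp
        (FreeGroup.lift_surjective_iff_closure_range_eq_top.2 (hgen k))
  exact Set.mem_biUnion (x := π.ker) ⟨⟨T, hT, hπT.symm⟩, hπ⟩ ⟨_, rfl, rfl⟩
end
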